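/- Let a₀ : ℝ × ℝ → ℝ and f₀ : ℝ × ℝ → ℂ be smooth with f₀ nowhere zero, satisfying the system (S): ∂_t a₀ = ∂_x(conj(f₀)·f₀) and (f₀)_{xt} + 2·a₀·f₀ = 0. Let Γ ∈ M_n(ℂ). Then smooth functions η₁, η₂ : ℝ × ℝ → ℂⁿ satisfy the linear system Γ·∂_x η₁ = a₀·η₁ + conj(∂_x f₀)·η₂, Γ·∂_x η₂ = −a₀·η₂ + (∂_x f₀)·η₁, ∂_t η₁ = −(1/2)·Γ·η₁ + conj(f₀)·η₂, ∂_t η₂ = (1/2)·Γ·η₂ − f₀·η₁, if and only if η₁ satisfies the two equations ∂_t∂_t η₁ − (conj(∂_t f₀)/conj(f₀))·∂_t η₁ − ( (1/4)·Γ² + (conj(∂_t f₀)/(2·conj(f₀)))·Γ − |f₀|²·I )·η₁ = 0 and Γ·∂_x η₁ − (conj(∂_x f₀)/conj(f₀))·∂_t η₁ − ( a₀·I + (conj(∂_x f₀)/(2·conj(f₀)))·Γ )·η₁ = 0, and η₂ = (1/conj(f₀))·( ∂_t η₁ + (1/2)·Γ·η₁ ). -/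

import Mathlib

open Matrix

/-- Partial x-derivative of a scalar function on ℝ × ℝ. -/
noncomputable def pdx (f : ℝ × ℝ → ℂ) (p : ℝ × ℝ) : ℂ := fderiv ℝ f p (1, 0)

/-- Partial t-derivative of a scalar function on ℝ × ℝ. -/
noncomputable def pdt (f : ℝ × ℝ → ℂ) (p : ℝ × ℝ) : ℂ := fderiv ℝ f p (0, 1)

/-- Entrywise partial x-derivative of a matrix-valued function on ℝ × ℝ. -/
noncomputable def pdxM {m k : ℕ} (M : ℝ × ℝ → Matrix (Fin m) (Fin k) ℂ)
    (p : ℝ × ℝ) : Matrix (Fin m) (Fin k) ℂ :=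
  Matrix.of fun i j => fderiv ℝ (fun q => M q i j) p (1, 0)

/-- Entrywise partial t-derivative of a matrix-valued function on ℝ × ℝ. -/
noncomputable def pdtM {m k : ℕ} (M : ℝ × ℝ → Matrix (Fin m) (Fin k) ℂ)
    (p : ℝ × ℝ) : Matrix (Fin m) (Fin k) ℂ :=
  Matrix.of fun i j => fderiv ℝ (fun q => M q i j) p (0, 1)

/-! ### Auxiliary material -/

/-- Directional partial derivative. -/
noncomputable def pd (v : ℝ × ℝ) (f : ℝ × ℝ → ℂ) (p : ℝ × ℝ) : ℂ := fderiv ℝ f p v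

/-- Directional entrywise partial derivative of a matrix-valued function. -/
noncomputable def pdM {m k : ℕ} (v : ℝ × ℝ) (M : ℝ × ℝ → Matrix (Fin m) (Fin k) ℂ)
    (p : ℝ × ℝ) : Matrix (Fin m) (Fin k) ℂ :=
  Matrix.of fun i j => fderiv ℝ (fun q => M q i j) p v

lemma pd_smooth (v : ℝ × ℝ) {f : ℝ × ℝ → ℂ} (hf : ContDiff ℝ (⊤ : ℕ∞) f) :
    ContDiff ℝ (⊤ : ℕ∞) (pd v f) := by
  have h : ContDiff ℝ (⊤ : ℕ∞) (fderiv ℝ f) := hf.fderiv_right (by simp)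
  exact (ContinuousLinearMap.apply ℝ ℂ v).contDiff.comp h

lemma pd_add (v : ℝ × ℝ) {f g : ℝ × ℝ → ℂ} (hf : Differentiable ℝ f)
    (hg : Differentiable ℝ g) (p : ℝ × ℝ) :
    pd v (fun q => f q + g q) p = pd v f p + pd v g p := by
  simp [pd, fderiv_fun_add (hf p) (hg p)]

lemma pd_mul (v : ℝ × ℝ) {f g : ℝ × ℝ → ℂ} (hf : Differentiable ℝ f)
    (hg : Differentiable ℝ g) (p : ℝ × ℝ) :
    pd v (fun q => f q * g q) p = f p * pd v g p + pd v f p * g p := by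
  simp [pd, fderiv_fun_mul (hf p) (hg p), smul_eq_mul]; ring

lemma pd_cmul (v : ℝ × ℝ) {f : ℝ × ℝ → ℂ} (hf : Differentiable ℝ f) (c : ℂ) (p : ℝ × ℝ) :
    pd v (fun q => c * f q) p = c * pd v f p := by
  simp [pd, fderiv_const_mul (hf p)]

lemma pd_conj (v : ℝ × ℝ) (f : ℝ × ℝ → ℂ) (p : ℝ × ℝ) :
    pd v (fun q => (starRingEnd ℂ) (f q)) p = (starRingEnd ℂ) (pd v f p) := by
  simp only [pd, starRingEnd_apply, fderiv_star]
  simp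

lemma pd_inv (v : ℝ × ℝ) {f : ℝ × ℝ → ℂ} (hf : Differentiable ℝ f) (p : ℝ × ℝ)
    (h0 : f p ≠ 0) :
    pd v (fun q => (f q)⁻¹) p = -pd v f p / (f p) ^ 2 := by
  have h : fderiv ℝ (fun q => (f q)⁻¹) p
      = (fderiv ℝ (fun z : ℂ => z⁻¹) (f p)).comp (fderiv ℝ f p) :=
    fderiv_comp p (differentiableAt_inv h0) (hf p)
  simp only [pd]
  rw [h, fderiv_inv' h0]
  simp only [ContinuousLinearMap.comp_apply, ContinuousLinearMap.neg_apply,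
    ContinuousLinearMap.mulLeftRight_apply]
  field_simp

lemma pd_div (v : ℝ × ℝ) {f g : ℝ × ℝ → ℂ} (hf : Differentiable ℝ f)
    (hg : Differentiable ℝ g) (h0 : ∀ q, g q ≠ 0) (p : ℝ × ℝ) :
    pd v (fun q => f q / g q) p
      = (pd v f p * g p - f p * pd v g p) / (g p) ^ 2 := by
  have hinv : Differentiable ℝ fun q => (g q)⁻¹ := fun q => (hg q).inv (h0 q)
  have h : pd v (fun q => f q * (g q)⁻¹) p
      = f p * pd v (fun q => (g q)⁻¹) p + pd v f p * (g p)⁻¹ := pd_mul v hf hinv p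
  simp only [div_eq_mul_inv]
  rw [h, pd_inv v hg p (h0 p)]
  field_simp [h0 p]
  ring

lemma pd_ofReal (v : ℝ × ℝ) {a : ℝ × ℝ → ℝ} (ha : Differentiable ℝ a) (p : ℝ × ℝ) :
    pd v (fun q => ((a q : ℝ) : ℂ)) p = (fderiv ℝ a p v : ℂ) := by
  have h : fderiv ℝ (fun q => ((a q : ℝ) : ℂ)) p
      = Complex.ofRealCLM.comp (fderiv ℝ a p) :=
    (Complex.ofRealCLM.hasFDerivAt.comp p (ha p).hasFDerivAt).fderiv
  simp only [pd]; rw [h]; simp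

lemma pd_comm (v w : ℝ × ℝ) {f : ℝ × ℝ → ℂ} (hf : ContDiff ℝ (⊤ : ℕ∞) f) (p : ℝ × ℝ) :
    pd v (pd w f) p = pd w (pd v f) p := by
  have hsymm : IsSymmSndFDerivAt ℝ f p :=
    hf.contDiffAt.isSymmSndFDerivAt (by rw [minSmoothness_of_isRCLikeNormedField]; change ((2 : ℕ∞) : WithTop ℕ∞) ≤ _; exact WithTop.coe_le_coe.mpr le_top)
  have hd : ∀ u : ℝ × ℝ, ∀ q : ℝ × ℝ, fderiv ℝ (fun r => fderiv ℝ f r u) q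
      = (ContinuousLinearMap.apply ℝ ℂ u).comp (fderiv ℝ (fderiv ℝ f) q) := by
    intro u q
    have h1 : DifferentiableAt ℝ (fderiv ℝ f) q :=
      ((hf.fderiv_right (m := (⊤ : ℕ∞)) (by simp)).differentiable (by simp)) q
    exact ((ContinuousLinearMap.apply ℝ ℂ u).hasFDerivAt.comp q h1.hasFDerivAt).fderiv
  show fderiv ℝ (fun q => fderiv ℝ f q w) p v = fderiv ℝ (fun q => fderiv ℝ f q v) p w
  rw [hd w p, hd v p]
  simpa using hsymm v w

section MatrixLemmas

variable {m k : ℕ} {v : ℝ × ℝ} {M N : ℝ × ℝ → Matrix (Fin m) (Fin k) ℂ}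

lemma pdM_apply (v : ℝ × ℝ) (M : ℝ × ℝ → Matrix (Fin m) (Fin k) ℂ) (p : ℝ × ℝ) (i j) :
    pdM v M p i j = pd v (fun q => M q i j) p := rfl

lemma pdM_congr {M N : ℝ × ℝ → Matrix (Fin m) (Fin k) ℂ} (h : ∀ q, M q = N q) (p : ℝ × ℝ) :
    pdM v M p = pdM v N p := by
  have : M = N := funext h
  rw [this]

lemma pdM_add (hM : ∀ i j, Differentiable ℝ fun q => M q i j)
    (hN : ∀ i j, Differentiable ℝ fun q => N q i j) (p : ℝ × ℝ) :
    pdM v (fun q => M q + N q) p = pdM v M p + pdM v N p := by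
  ext i j
  simp only [pdM_apply, Matrix.add_apply]
  exact pd_add v (hM i j) (hN i j) p

lemma pdM_smul {c : ℝ × ℝ → ℂ} (hc : Differentiable ℝ c)
    (hM : ∀ i j, Differentiable ℝ fun q => M q i j) (p : ℝ × ℝ) :
    pdM v (fun q => c q • M q) p = pd v c p • M p + c p • pdM v M p := by
  ext i j
  simp only [pdM_apply, Matrix.add_apply, Matrix.smul_apply, smul_eq_mul]
  rw [pd_mul v hc (hM i j) p]
  ring

lemma pdM_csmul (c : ℂ) (hM : ∀ i j, Differentiable ℝ fun q => M q i j) (p : ℝ × ℝ) :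
    pdM v (fun q => c • M q) p = c • pdM v M p := by
  ext i j
  simp only [pdM_apply, Matrix.smul_apply, smul_eq_mul, pd]
  rw [fderiv_const_mul (hM i j p)]
  simp

lemma pdM_matmul (A : Matrix (Fin m) (Fin m) ℂ)
    (hM : ∀ i j, Differentiable ℝ fun q => M q i j) (p : ℝ × ℝ) :
    pdM v (fun q => A * M q) p = A * pdM v M p := by
  ext i j
  simp only [pdM_apply, Matrix.mul_apply, pd]
  rw [fderiv_fun_sum (fun x _ => ((hM x j) p).const_mul (A i x))]
  simp only [ContinuousLinearMap.coe_sum', Finset.sum_apply]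
  refine Finset.sum_congr rfl fun x _ => ?_
  rw [fderiv_const_mul (hM x j p)]
  simp

lemma pdM_comm (w : ℝ × ℝ) (hM : ∀ i j, ContDiff ℝ (⊤ : ℕ∞) fun q => M q i j) (p : ℝ × ℝ) :
    pdM v (fun q => pdM w M q) p = pdM w (fun q => pdM v M q) p := by
  ext i j
  exact pd_comm v w (hM i j) p

lemma entries_add (hM : ∀ i j, Differentiable ℝ fun q => M q i j)
    (hN : ∀ i j, Differentiable ℝ fun q => N q i j) :
    ∀ i j, Differentiable ℝ fun q => (M q + N q) i j := by
  intro i j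
  simp only [Matrix.add_apply]
  exact (hM i j).add (hN i j)

lemma entries_smul {c : ℝ × ℝ → ℂ} (hc : Differentiable ℝ c)
    (hM : ∀ i j, Differentiable ℝ fun q => M q i j) :
    ∀ i j, Differentiable ℝ fun q => (c q • M q) i j := by
  intro i j
  simp only [Matrix.smul_apply, smul_eq_mul]
  exact hc.mul (hM i j)

lemma entries_csmul (c : ℂ) (hM : ∀ i j, Differentiable ℝ fun q => M q i j) :
    ∀ i j, Differentiable ℝ fun q => (c • M q) i j := by
  intro i j
  simp only [Matrix.smul_apply, smul_eq_mul]
  exact (differentiable_const c).mul (hM i j)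

lemma entries_matmul (A : Matrix (Fin m) (Fin m) ℂ)
    (hM : ∀ i j, Differentiable ℝ fun q => M q i j) :
    ∀ i j, Differentiable ℝ fun q => (A * M q) i j := by
  intro i j
  simp only [Matrix.mul_apply]
  exact Differentiable.fun_sum fun x _ => (differentiable_const (A i x)).mul (hM x j)

end MatrixLemmas

/-! ### Wrappers in terms of `pdx`, `pdt`, `pdxM`, `pdtM` -/

lemma pd_one_div (v : ℝ × ℝ) {f : ℝ × ℝ → ℂ} (hf : Differentiable ℝ f) (p : ℝ × ℝ)
    (h0 : f p ≠ 0) :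
    pd v (fun q => 1 / f q) p = -pd v f p / (f p) ^ 2 := by
  simp only [one_div]
  exact pd_inv v hf p h0

lemma pdt_conj (f : ℝ × ℝ → ℂ) (p : ℝ × ℝ) :
    pdt (fun q => (starRingEnd ℂ) (f q)) p = (starRingEnd ℂ) (pdt f p) := pd_conj (0,1) f p

lemma pdx_conj (f : ℝ × ℝ → ℂ) (p : ℝ × ℝ) :
    pdx (fun q => (starRingEnd ℂ) (f q)) p = (starRingEnd ℂ) (pdx f p) := pd_conj (1,0) f p

lemma pdt_ofReal {a : ℝ × ℝ → ℝ} (ha : Differentiable ℝ a) (p : ℝ × ℝ) :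
    pdt (fun q => ((a q : ℝ) : ℂ)) p = (fderiv ℝ a p (0, 1) : ℂ) := pd_ofReal (0,1) ha p

lemma pdx_mul {f g : ℝ × ℝ → ℂ} (hf : Differentiable ℝ f)
    (hg : Differentiable ℝ g) (p : ℝ × ℝ) :
    pdx (fun q => f q * g q) p = f p * pdx g p + pdx f p * g p := pd_mul (1,0) hf hg p

lemma pdt_div {f g : ℝ × ℝ → ℂ} (hf : Differentiable ℝ f)
    (hg : Differentiable ℝ g) (h0 : ∀ q, g q ≠ 0) (p : ℝ × ℝ) :
    pdt (fun q => f q / g q) p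
      = (pdt f p * g p - f p * pdt g p) / (g p) ^ 2 := pd_div (0,1) hf hg h0 p

lemma pdt_cmul {f : ℝ × ℝ → ℂ} (hf : Differentiable ℝ f) (c : ℂ) (p : ℝ × ℝ) :
    pdt (fun q => c * f q) p = c * pdt f p := pd_cmul (0,1) hf c p

lemma pdt_one_div {f : ℝ × ℝ → ℂ} (hf : Differentiable ℝ f) (p : ℝ × ℝ)
    (h0 : f p ≠ 0) : pdt (fun q => 1 / f q) p = -pdt f p / (f p) ^ 2 :=
  pd_one_div (0,1) hf p h0

lemma pdx_one_div {f : ℝ × ℝ → ℂ} (hf : Differentiable ℝ f) (p : ℝ × ℝ)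
    (h0 : f p ≠ 0) : pdx (fun q => 1 / f q) p = -pdx f p / (f p) ^ 2 :=
  pd_one_div (1,0) hf p h0

section MatrixWrappers

variable {m k : ℕ} {M N : ℝ × ℝ → Matrix (Fin m) (Fin k) ℂ}

lemma pdtM_congr {M N : ℝ × ℝ → Matrix (Fin m) (Fin k) ℂ} (h : ∀ q, M q = N q) (p : ℝ × ℝ) :
    pdtM M p = pdtM N p := pdM_congr h p

lemma pdxM_congr {M N : ℝ × ℝ → Matrix (Fin m) (Fin k) ℂ} (h : ∀ q, M q = N q) (p : ℝ × ℝ) :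
    pdxM M p = pdxM N p := pdM_congr h p

lemma pdtM_add (hM : ∀ i j, Differentiable ℝ fun q => M q i j)
    (hN : ∀ i j, Differentiable ℝ fun q => N q i j) (p : ℝ × ℝ) :
    pdtM (fun q => M q + N q) p = pdtM M p + pdtM N p := pdM_add hM hN p

lemma pdxM_add (hM : ∀ i j, Differentiable ℝ fun q => M q i j)
    (hN : ∀ i j, Differentiable ℝ fun q => N q i j) (p : ℝ × ℝ) :
    pdxM (fun q => M q + N q) p = pdxM M p + pdxM N p := pdM_add hM hN p

lemma pdtM_smul {c : ℝ × ℝ → ℂ} (hc : Differentiable ℝ c)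
    (hM : ∀ i j, Differentiable ℝ fun q => M q i j) (p : ℝ × ℝ) :
    pdtM (fun q => c q • M q) p = pdt c p • M p + c p • pdtM M p := pdM_smul hc hM p

lemma pdxM_smul {c : ℝ × ℝ → ℂ} (hc : Differentiable ℝ c)
    (hM : ∀ i j, Differentiable ℝ fun q => M q i j) (p : ℝ × ℝ) :
    pdxM (fun q => c q • M q) p = pdx c p • M p + c p • pdxM M p := pdM_smul hc hM p

lemma pdtM_csmul (c : ℂ) (hM : ∀ i j, Differentiable ℝ fun q => M q i j) (p : ℝ × ℝ) :
    pdtM (fun q => c • M q) p = c • pdtM M p := pdM_csmul c hM p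

lemma pdxM_csmul (c : ℂ) (hM : ∀ i j, Differentiable ℝ fun q => M q i j) (p : ℝ × ℝ) :
    pdxM (fun q => c • M q) p = c • pdxM M p := pdM_csmul c hM p

lemma pdtM_matmul (A : Matrix (Fin m) (Fin m) ℂ)
    (hM : ∀ i j, Differentiable ℝ fun q => M q i j) (p : ℝ × ℝ) :
    pdtM (fun q => A * M q) p = A * pdtM M p := pdM_matmul A hM p

lemma pdxM_matmul (A : Matrix (Fin m) (Fin m) ℂ)
    (hM : ∀ i j, Differentiable ℝ fun q => M q i j) (p : ℝ × ℝ) :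
    pdxM (fun q => A * M q) p = A * pdxM M p := pdM_matmul A hM p

lemma pdxM_pdtM_comm (hM : ∀ i j, ContDiff ℝ (⊤ : ℕ∞) fun q => M q i j) (p : ℝ × ℝ) :
    pdxM (fun q => pdtM M q) p = pdtM (fun q => pdxM M q) p :=
  pdM_comm (v := (1,0)) (0,1) hM p

end MatrixWrappers

lemma diff_div {f g : ℝ × ℝ → ℂ} (hf : Differentiable ℝ f) (hg : Differentiable ℝ g)
    (h0 : ∀ q, g q ≠ 0) : Differentiable ℝ fun q => f q / g q := by
  simp only [div_eq_mul_inv]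
  exact hf.mul fun q => (hg q).inv (h0 q)

set_option maxRecDepth 10000 in
set_option maxHeartbeats 1000000 in
theorem stmt_4 {n : ℕ}
    (a₀ : ℝ × ℝ → ℝ) (f₀ : ℝ × ℝ → ℂ)
    (ha₀ : ContDiff ℝ (⊤ : ℕ∞) a₀) (hf₀ : ContDiff ℝ (⊤ : ℕ∞) f₀) (hf₀0 : ∀ p, f₀ p ≠ 0)
    (hS₁ : ∀ p : ℝ × ℝ, (fderiv ℝ a₀ p (0, 1) : ℂ)
        = pdx (fun q => (starRingEnd ℂ) (f₀ q) * f₀ q) p)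
    (hS₂ : ∀ p : ℝ × ℝ, pdt (fun q => pdx f₀ q) p + 2 * (a₀ p : ℂ) * f₀ p = 0)
    (Γ : Matrix (Fin n) (Fin n) ℂ)
    (η₁ η₂ : ℝ × ℝ → Matrix (Fin n) (Fin 1) ℂ)
    (hη₁ : ∀ i j, ContDiff ℝ (⊤ : ℕ∞) fun p => η₁ p i j)
    (hη₂ : ∀ i j, ContDiff ℝ (⊤ : ℕ∞) fun p => η₂ p i j) :
    ((∀ p, Γ * pdxM η₁ p
          = (a₀ p : ℂ) • η₁ p + (starRingEnd ℂ) (pdx f₀ p) • η₂ p) ∧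
     (∀ p, Γ * pdxM η₂ p = -(a₀ p : ℂ) • η₂ p + pdx f₀ p • η₁ p) ∧
     (∀ p, pdtM η₁ p
          = -((1 : ℂ)/2) • (Γ * η₁ p) + (starRingEnd ℂ) (f₀ p) • η₂ p) ∧
     (∀ p, pdtM η₂ p = ((1 : ℂ)/2) • (Γ * η₂ p) - f₀ p • η₁ p))
    ↔
    ((∀ p, pdtM (fun q => pdtM η₁ q) p
          - ((starRingEnd ℂ) (pdt f₀ p) / (starRingEnd ℂ) (f₀ p)) • pdtM η₁ p
          - (((1 : ℂ)/4) • (Γ * Γ)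
              + ((starRingEnd ℂ) (pdt f₀ p) / (2 * (starRingEnd ℂ) (f₀ p))) • Γ
              - ((starRingEnd ℂ) (f₀ p) * f₀ p) • (1 : Matrix (Fin n) (Fin n) ℂ))
            * η₁ p = 0) ∧
     (∀ p, Γ * pdxM η₁ p
          - ((starRingEnd ℂ) (pdx f₀ p) / (starRingEnd ℂ) (f₀ p)) • pdtM η₁ p
          - ((a₀ p : ℂ) • (1 : Matrix (Fin n) (Fin n) ℂ)
              + ((starRingEnd ℂ) (pdx f₀ p) / (2 * (starRingEnd ℂ) (f₀ p))) • Γ)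
            * η₁ p = 0) ∧
     (∀ p, η₂ p
          = (1 / (starRingEnd ℂ) (f₀ p)) • (pdtM η₁ p + ((1 : ℂ)/2) • (Γ * η₁ p)))) := by
  have hf₀d : Differentiable ℝ f₀ := hf₀.differentiable (by simp)
  have hη₁d : ∀ i j, Differentiable ℝ fun q => η₁ q i j :=
    fun i j => (hη₁ i j).differentiable (by simp)
  have hη₂d : ∀ i j, Differentiable ℝ fun q => η₂ q i j :=
    fun i j => (hη₂ i j).differentiable (by simp)
  have hcN : ∀ p, (starRingEnd ℂ) (f₀ p) ≠ 0 := fun p hp => hf₀0 p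
    ((starRingEnd ℂ).injective (by rw [hp, map_zero]))
  have hcfd : Differentiable ℝ fun q => (starRingEnd ℂ) (f₀ q) := by
    simpa only [starRingEnd_apply] using hf₀d.star
  have hfxd : Differentiable ℝ (pdx f₀) := (pd_smooth (1,0) hf₀).differentiable (by simp)
  have hcfxd : Differentiable ℝ fun q => (starRingEnd ℂ) (pdx f₀ q) := by
    simpa only [starRingEnd_apply] using hfxd.star
  have haC : Differentiable ℝ fun q => ((a₀ q : ℝ) : ℂ) :=
    Complex.ofRealCLM.differentiable.comp (ha₀.differentiable (by simp))
  have hDtη₁d : ∀ i j, Differentiable ℝ fun q => pdtM η₁ q i j :=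
    fun i j => (pd_smooth (0,1) (hη₁ i j)).differentiable (by simp)
  have hDxη₁d : ∀ i j, Differentiable ℝ fun q => pdxM η₁ q i j :=
    fun i j => (pd_smooth (1,0) (hη₁ i j)).differentiable (by simp)
  have hGη₁ : ∀ i j, Differentiable ℝ fun q => (Γ * η₁ q) i j := entries_matmul Γ hη₁d
  have hinvd : Differentiable ℝ fun q => 1 / (starRingEnd ℂ) (f₀ q) :=
    diff_div (differentiable_const 1) hcfd hcN
  have hInner : ∀ i j, Differentiable ℝ
      fun q => (pdtM η₁ q + ((1 : ℂ)/2) • (Γ * η₁ q)) i j :=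
    entries_add hDtη₁d (entries_csmul _ hGη₁)
  have hS₂' : ∀ p, pdt (fun q => pdx f₀ q) p = -(2 * (a₀ p : ℂ) * f₀ p) :=
    fun p => eq_neg_of_add_eq_zero_left (hS₂ p)
  have hdta : ∀ p, pdt (fun q => ((a₀ q : ℝ) : ℂ)) p
      = (starRingEnd ℂ) (f₀ p) * pdx f₀ p + (starRingEnd ℂ) (pdx f₀ p) * f₀ p := by
    intro p
    rw [pdt_ofReal (ha₀.differentiable (by simp)) p, hS₁ p, pdx_mul hcfd hf₀d p, pdx_conj]
  constructor
  · rintro ⟨E1, E2, E3, E4⟩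
    have hC3 : ∀ p, η₂ p
        = (1 / (starRingEnd ℂ) (f₀ p)) • (pdtM η₁ p + ((1 : ℂ)/2) • (Γ * η₁ p)) := by
      intro p
      have h := hcN p
      rw [E3 p]
      match_scalars <;> (field_simp; try ring; try (ring_nf; field_simp; try ring); try tauto)
    refine ⟨?_, ?_, hC3⟩
    · intro p
      have h := hcN p
      have key : pdtM (fun q => pdtM η₁ q) p
          = pdtM (fun q => -((1 : ℂ)/2) • (Γ * η₁ q) + (starRingEnd ℂ) (f₀ q) • η₂ q) p :=
        pdtM_congr (fun q => E3 q) p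
      rw [pdtM_add (entries_csmul (-((1 : ℂ)/2)) hGη₁) (entries_smul hcfd hη₂d),
          pdtM_csmul (-((1 : ℂ)/2)) hGη₁, pdtM_matmul Γ hη₁d,
          pdtM_smul hcfd hη₂d, pdt_conj] at key
      rw [key, E4 p, hC3 p]
      simp only [Matrix.mul_add, Matrix.mul_smul, Matrix.add_mul, Matrix.sub_mul,
        Matrix.smul_mul, Matrix.one_mul, Matrix.mul_assoc]
      match_scalars <;> (field_simp; try ring; try (ring_nf; field_simp; try ring); try tauto)
    · intro p
      have h := hcN p
      rw [E1 p, hC3 p]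
      simp only [Matrix.mul_add, Matrix.mul_smul, Matrix.add_mul, Matrix.sub_mul,
        Matrix.smul_mul, Matrix.one_mul, Matrix.mul_assoc]
      match_scalars <;> (field_simp; try ring; try (ring_nf; field_simp; try ring); try tauto)
  · rintro ⟨C1, C2, C3⟩
    have hC1' : ∀ p, pdtM (fun q => pdtM η₁ q) p
        = ((starRingEnd ℂ) (pdt f₀ p) / (starRingEnd ℂ) (f₀ p)) • pdtM η₁ p
          + (((1 : ℂ)/4) • (Γ * Γ)
              + ((starRingEnd ℂ) (pdt f₀ p) / (2 * (starRingEnd ℂ) (f₀ p))) • Γ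
              - ((starRingEnd ℂ) (f₀ p) * f₀ p) • (1 : Matrix (Fin n) (Fin n) ℂ)) * η₁ p := by
      intro p
      have h := C1 p
      rwa [sub_sub, sub_eq_zero] at h
    have hGx : ∀ p, Γ * pdxM η₁ p
        = ((starRingEnd ℂ) (pdx f₀ p) / (starRingEnd ℂ) (f₀ p)) • pdtM η₁ p
          + (((a₀ p : ℂ)) • η₁ p
            + ((starRingEnd ℂ) (pdx f₀ p) / (2 * (starRingEnd ℂ) (f₀ p))) • (Γ * η₁ p)) := by
      intro p
      have h := C2 p
      rw [sub_sub, sub_eq_zero] at h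
      rw [h, Matrix.add_mul, Matrix.smul_mul, Matrix.smul_mul, Matrix.one_mul]
    have hE3 : ∀ p, pdtM η₁ p
        = -((1 : ℂ)/2) • (Γ * η₁ p) + (starRingEnd ℂ) (f₀ p) • η₂ p := by
      intro p
      have h := hcN p
      rw [C3 p]
      match_scalars <;> (field_simp; try ring; try (ring_nf; field_simp; try ring); try tauto)
    have hE1 : ∀ p, Γ * pdxM η₁ p
        = (a₀ p : ℂ) • η₁ p + (starRingEnd ℂ) (pdx f₀ p) • η₂ p := by
      intro p
      have h := hcN p
      rw [hGx p, C3 p]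
      simp only [smul_add, smul_smul]
      match_scalars <;> (field_simp; try ring; try (ring_nf; field_simp; try ring); try tauto)
    have hE4 : ∀ p, pdtM η₂ p = ((1 : ℂ)/2) • (Γ * η₂ p) - f₀ p • η₁ p := by
      intro p
      have h := hcN p
      have h2 := hf₀0 p
      have key : pdtM η₂ p = pdtM (fun q =>
          (1 / (starRingEnd ℂ) (f₀ q)) • (pdtM η₁ q + ((1 : ℂ)/2) • (Γ * η₁ q))) p :=
        pdtM_congr (fun q => C3 q) p
      rw [pdtM_smul hinvd hInner, pdtM_add hDtη₁d (entries_csmul ((1 : ℂ)/2) hGη₁),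
          pdtM_csmul ((1 : ℂ)/2) hGη₁, pdtM_matmul Γ hη₁d,
          pdt_one_div hcfd p (hcN p), pdt_conj] at key
      rw [key, hC1' p, C3 p]
      simp only [Matrix.mul_add, Matrix.mul_smul, Matrix.add_mul, Matrix.sub_mul,
        Matrix.smul_mul, Matrix.one_mul, Matrix.mul_assoc]
      match_scalars <;> (field_simp; try ring; try (ring_nf; field_simp; try ring); try tauto)
    have hE2 : ∀ p, Γ * pdxM η₂ p = -(a₀ p : ℂ) • η₂ p + pdx f₀ p • η₁ p := by
      intro p
      have h := hcN p
      have h2 := hf₀0 p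
      have hs₁d : Differentiable ℝ
          fun q => (starRingEnd ℂ) (pdx f₀ q) / (starRingEnd ℂ) (f₀ q) :=
        diff_div hcfxd hcfd hcN
      have h2cd : Differentiable ℝ fun q => 2 * (starRingEnd ℂ) (f₀ q) :=
        hcfd.const_mul 2
      have h2cN : ∀ q, 2 * (starRingEnd ℂ) (f₀ q) ≠ 0 :=
        fun q => mul_ne_zero (by norm_num) (hcN q)
      have hs₂d : Differentiable ℝ
          fun q => (starRingEnd ℂ) (pdx f₀ q) / (2 * (starRingEnd ℂ) (f₀ q)) :=
        diff_div hcfxd h2cd h2cN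
      have key : pdxM η₂ p = pdxM (fun q =>
          (1 / (starRingEnd ℂ) (f₀ q)) • (pdtM η₁ q + ((1 : ℂ)/2) • (Γ * η₁ q))) p :=
        pdxM_congr (fun q => C3 q) p
      rw [pdxM_smul hinvd hInner, pdxM_add hDtη₁d (entries_csmul ((1 : ℂ)/2) hGη₁),
          pdxM_csmul ((1 : ℂ)/2) hGη₁, pdxM_matmul Γ hη₁d,
          pdxM_pdtM_comm hη₁ p,
          pdx_one_div hcfd p (hcN p), pdx_conj] at key
      rw [key]
      simp only [Matrix.mul_add, Matrix.mul_smul]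
      rw [← pdtM_matmul Γ hDxη₁d p, pdtM_congr hGx p,
          pdtM_add (entries_smul hs₁d hDtη₁d)
            (entries_add (entries_smul haC hη₁d) (entries_smul hs₂d hGη₁)),
          pdtM_smul hs₁d hDtη₁d,
          pdtM_add (entries_smul haC hη₁d) (entries_smul hs₂d hGη₁),
          pdtM_smul haC hη₁d, pdtM_smul hs₂d hGη₁, pdtM_matmul Γ hη₁d,
          pdt_div hcfxd hcfd hcN p, pdt_div hcfxd h2cd h2cN p,
          pdt_cmul hcfd 2 p, pdt_conj, pdt_conj, hS₂' p, hdta p, hC1' p, hGx p, C3 p]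
      simp only [_root_.map_neg, _root_.map_mul, _root_.map_ofNat, Complex.conj_ofReal]
      simp only [Matrix.mul_add, Matrix.mul_smul, Matrix.add_mul, Matrix.sub_mul,
        Matrix.smul_mul, Matrix.one_mul, Matrix.mul_assoc]
      match_scalars <;> (field_simp; try ring; try (ring_nf; field_simp; try ring); try tauto)
    exact ⟨hE1, hE2, hE3, hE4⟩
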